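/- The orbits of the group K acting naturally on G are exactly the sets {e}, Z \ {e}, and Y_i for i ∈ F_q; in particular these sets are pairwise disjoint and partition G. -/

import Mathlib

/-!
Identify `(x, y)` with `x + y√ε ∈ F(√ε)`. Then `ρ(α, β)` multiplies it by `α + β√ε` and scales
both `x² − εy²` and `z − xy/2` by the norm `α² − εβ²`. Since `Y_i` is the locus
`z − xy/2 = i(x² − εy²)`, `(x, y) ≠ 0`, each `Y_i` is `K`-invariant, and `K` is transitive on it
because `F(√ε)ˣ` acts simply transitively on nonzero vectors. On the centre `ρ` is multiplication
by the norm, which maps onto `Fˣ` when `q` is odd.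
-/

/-- The Heisenberg group `H₃(F)` of upper unitriangular 3×3 matrices over `F`,
recorded by the three free entries: `x` in position (1,2), `y` in position (2,3),
`z` in position (1,3). -/
@[ext]
structure Heis (F : Type*) where
  x : F
  y : F
  z : F
deriving DecidableEq

namespace Heis

variable {F : Type*} [Field F]

/-- Multiplication corresponding to the matrix product. -/
instance : Group (Heis F) where
  mul a b := ⟨a.x + b.x, a.y + b.y, a.z + b.z + a.x * b.y⟩
  one := ⟨0, 0, 0⟩
  inv a := ⟨-a.x, -a.y, -a.z + a.x * a.y⟩
  mul_assoc a b c := Heis.ext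
    (show a.x + b.x + c.x = a.x + (b.x + c.x) by ring)
    (show a.y + b.y + c.y = a.y + (b.y + c.y) by ring)
    (show a.z + b.z + a.x * b.y + c.z + (a.x + b.x) * c.y
        = a.z + (b.z + c.z + b.x * c.y) + a.x * (b.y + c.y) by ring)
  one_mul a := Heis.ext
    (show (0 : F) + a.x = a.x by ring)
    (show (0 : F) + a.y = a.y by ring)
    (show (0 : F) + a.z + 0 * a.y = a.z by ring)
  mul_one a := Heis.ext
    (show a.x + 0 = a.x by ring)
    (show a.y + 0 = a.y by ring)
    (show a.z + 0 + a.x * 0 = a.z by ring)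
  inv_mul_cancel a := Heis.ext
    (show -a.x + a.x = 0 by ring)
    (show -a.y + a.y = 0 by ring)
    (show -a.z + a.x * a.y + a.z + -a.x * a.y = 0 by ring)

instance [Fintype F] : Fintype (Heis F) :=
  Fintype.ofEquiv (F × F × F)
    ⟨fun p => ⟨p.1, p.2.1, p.2.2⟩, fun a => (a.x, a.y, a.z), fun _ => rfl, fun _ => rfl⟩

end Heis

/-- The element `g(x,y,z)` of the Heisenberg group. -/
def gElt {F : Type*} (x y z : F) : Heis F := ⟨x, y, z⟩

/-- The center `Z = {g(0,0,z) : z ∈ F}` of the Heisenberg group, as a set. -/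
def Zset (F : Type*) [Field F] : Set (Heis F) := {g : Heis F | g.x = 0 ∧ g.y = 0}

/-- The center `Z` as a subgroup of the Heisenberg group. -/
def Zsub (F : Type*) [Field F] : Subgroup (Heis F) where
  carrier := Zset F
  mul_mem' := fun {a b} ha hb =>
    ⟨show a.x + b.x = 0 by rw [ha.1, hb.1, add_zero],
     show a.y + b.y = 0 by rw [ha.2, hb.2, add_zero]⟩
  one_mem' := ⟨rfl, rfl⟩
  inv_mem' := fun {a} ha =>
    ⟨show -a.x = 0 by rw [ha.1, neg_zero],
     show -a.y = 0 by rw [ha.2, neg_zero]⟩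

/-- `γ_i(α,β) = αβ/2 + (α² − εβ²)i`. -/
def gam {F : Type*} [Field F] (ε i α β : F) : F := α * β / 2 + (α ^ 2 - ε * β ^ 2) * i

/-- `Y_i = {g(α, β, γ_i(α,β)) : (α,β) ≠ (0,0)}`. -/
def Yset {F : Type*} [Field F] (ε i : F) : Set (Heis F) :=
  {g : Heis F | ∃ α β : F, (α, β) ≠ (0, 0) ∧ g = gElt α β (gam ε i α β)}

/-- `X_i = Y_i ∪ {e}`. -/
def Xset {F : Type*} [Field F] (ε i : F) : Set (Heis F) := Yset ε i ∪ {1}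

/-- The map `ρ(M) : G → G` attached to the matrix `M = [[α,β],[εβ,α]]`. -/
def rho {F : Type*} [Field F] (ε α β : F) : Heis F → Heis F := fun g =>
  gElt (α * g.x + ε * β * g.y) (β * g.x + α * g.y)
    (α * β * (g.x ^ 2 / 2 + ε * g.y ^ 2 / 2) + ε * β ^ 2 * g.x * g.y
      + (α ^ 2 - ε * β ^ 2) * g.z)

/-- `K = {ρ(M) : M = [[α,β],[εβ,α]], (α,β) ≠ (0,0)}`, as a set of maps `G → G`. -/
def Kset {F : Type*} [Field F] (ε : F) : Set (Heis F → Heis F) :=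
  {f | ∃ α β : F, (α, β) ≠ (0, 0) ∧ f = rho ε α β}

/-- The family of sets `{e}`, `Z \ {e}`, `Y_i` for `i ∈ F`. -/
def SFam {F : Type*} [Field F] (ε : F) : Set (Set (Heis F)) :=
  insert {1} (insert (Zset F \ {1}) {S | ∃ i : F, S = Yset ε i})

/-- `f` preserves each of the basic sets `{e}`, `Z \ {e}`, `Y_i`:
`hg⁻¹ ∈ S ↔ f(h)f(g)⁻¹ ∈ S`. -/
def Preserves {F : Type*} [Field F] (ε : F) (f : Heis F → Heis F) : Prop :=
  ∀ S ∈ SFam ε, ∀ g h : Heis F, h * g⁻¹ ∈ S ↔ f h * (f g)⁻¹ ∈ S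

/-- The set of permutations of `G` of the form `x ↦ σ(x)·c` with `σ ∈ K`, `c ∈ G`. -/
def Aset {F : Type*} [Field F] (ε : F) : Set (Equiv.Perm (Heis F)) :=
  {f | ∃ σ ∈ Kset ε, ∃ c : Heis F, ∀ x : Heis F, f x = σ x * c}

/-- The operation `ψ` on `F ∪ {∞}`, with `∞` encoded as `none`. -/
def psi {F : Type*} [Field F] [DecidableEq F] (ε : F) : Option F → Option F → Option F
  | none, j => j
  | some i, none => some i
  | some i, some j => if i + j = 0 then none else some ((i * j + ε / 16) / (i + j))

/-- `Y_k` for `k ∈ F ∪ {∞}`, where `Y_∞ = Z \ {e}`. -/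
def YInf {F : Type*} [Field F] (ε : F) : Option F → Set (Heis F)
  | some i => Yset ε i
  | none => Zset F \ {1}

section Orbits

variable {X : Type*} {K : Set (X → X)}

theorem orbit_eq_of_mem {S : Set X} (hmaps : ∀ f ∈ K, Set.MapsTo f S S)
    (htrans : ∀ g ∈ S, ∀ h ∈ S, ∃ f ∈ K, f g = h) {g : X} (hg : g ∈ S) :
    {y | ∃ f ∈ K, f g = y} = S :=
  Set.Subset.antisymm (by rintro _ ⟨f, hf, rfl⟩; exact hmaps f hf hg) (htrans g hg)

theorem setOf_orbit_eq {P : Set (Set X)} (hcover : ∀ g, ∃ S ∈ P, g ∈ S)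
    (hne : ∀ S ∈ P, S.Nonempty) (horbit : ∀ S ∈ P, ∀ g ∈ S, {y | ∃ f ∈ K, f g = y} = S) :
    {S | ∃ g, S = {y | ∃ f ∈ K, f g = y}} = P := by
  ext S
  constructor
  · rintro ⟨g, rfl⟩
    obtain ⟨T, hT, hg⟩ := hcover g
    rwa [horbit T hT g hg]
  · intro hS
    obtain ⟨g, hg⟩ := hne S hS
    exact ⟨g, (horbit S hS g hg).symm⟩

end Orbits

section NormForm

variable {F : Type*} [Field F] {ε : F}

theorem sq_sub_mul_sq_ne_zero_iff (hε : ¬IsSquare ε) {a b : F} :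
    a ^ 2 - ε * b ^ 2 ≠ 0 ↔ (a, b) ≠ (0, 0) := by
  refine ⟨fun h hab => h (by simp_all), fun hab h => ?_⟩
  by_cases hb : b = 0
  · subst hb
    exact hab (by simpa using h)
  · exact hε ⟨a / b, by field_simp; linear_combination -h⟩

theorem exists_sq_sub_mul_sq_eq [Fintype F] (hodd : Odd (Fintype.card F)) (hε : ε ≠ 0) (c : F) :
    ∃ a b : F, a ^ 2 - ε * b ^ 2 = c := by
  open Polynomial in
  obtain ⟨a, b, hab⟩ := FiniteField.exists_root_sum_quadratic (f := X ^ 2 - C c)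
    (g := C (-ε) * X ^ 2) (degree_X_pow_sub_C two_pos c)
    (degree_C_mul_X_pow 2 (neg_ne_zero.mpr hε)) (Nat.odd_iff.mp hodd)
  simp only [eval_sub, eval_pow, eval_X, eval_C, eval_mul] at hab
  exact ⟨a, b, by linear_combination hab⟩

theorem two_ne_zero_of_odd_card [Fintype F] (hodd : Odd (Fintype.card F)) : (2 : F) ≠ 0 :=
  Ring.two_ne_zero fun h => by
    have := FiniteField.even_card_iff_char_two.mp h
    exact Nat.not_even_iff_odd.mpr hodd (Nat.even_iff.mpr this)

/-- Division by a nonzero element of `F(√ε)`, written in coordinates. -/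
theorem exists_mul_eq (hε : ¬IsSquare ε) {x y : F} (hxy : (x, y) ≠ (0, 0)) (x' y' : F) :
    ∃ α β : F, α * x + ε * β * y = x' ∧ β * x + α * y = y' := by
  have hn := (sq_sub_mul_sq_ne_zero_iff hε).mpr hxy
  refine ⟨(x * x' - ε * y * y') / (x ^ 2 - ε * y ^ 2), (x * y' - y * x') / (x ^ 2 - ε * y ^ 2),
    ?_, ?_⟩
  · linear_combination x' * mul_inv_cancel₀ hn
  · linear_combination y' * mul_inv_cancel₀ hn

end NormForm

section Heisenberg

variable {F : Type*} [Field F] {ε : F}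

@[simp] theorem Heis.one_x : (1 : Heis F).x = 0 := rfl
@[simp] theorem Heis.one_y : (1 : Heis F).y = 0 := rfl
@[simp] theorem Heis.one_z : (1 : Heis F).z = 0 := rfl

theorem Heis.eq_one_iff {g : Heis F} : g = 1 ↔ g.x = 0 ∧ g.y = 0 ∧ g.z = 0 := by
  rw [Heis.ext_iff]; simp

theorem mem_Zset_diff_one_iff {g : Heis F} :
    g ∈ Zset F \ {1} ↔ g.x = 0 ∧ g.y = 0 ∧ g.z ≠ 0 := by
  simp only [Zset, Set.mem_sdiff, Set.mem_ofPred_eq, Set.mem_singleton_iff, Heis.eq_one_iff]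
  tauto

theorem mem_Yset_iff {i : F} {g : Heis F} :
    g ∈ Yset ε i ↔ (g.x, g.y) ≠ (0, 0) ∧ g.z - g.x * g.y / 2 = (g.x ^ 2 - ε * g.y ^ 2) * i := by
  constructor
  · rintro ⟨α, β, hαβ, rfl⟩
    exact ⟨hαβ, by simp only [gElt, gam]; ring⟩
  · rintro ⟨hxy, hz⟩
    exact ⟨g.x, g.y, hxy, Heis.ext rfl rfl (by simp only [gElt, gam]; linear_combination hz)⟩

theorem one_notMem_Yset {i : F} : (1 : Heis F) ∉ Yset ε i := fun h =>
  (mem_Yset_iff.mp h).1 rfl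

theorem eq_of_mem_Yset {i : F} {g h : Heis F} (hg : g ∈ Yset ε i) (hh : h ∈ Yset ε i)
    (hx : g.x = h.x) (hy : g.y = h.y) : g = h := by
  have hgz := (mem_Yset_iff.mp hg).2
  have hhz := (mem_Yset_iff.mp hh).2
  rw [hx, hy] at hgz
  exact Heis.ext hx hy (by linear_combination hgz - hhz)

theorem index_eq_of_mem_Yset (hε : ¬IsSquare ε) {i j : F} {g : Heis F}
    (hi : g ∈ Yset ε i) (hj : g ∈ Yset ε j) : i = j := by
  obtain ⟨hxy, hgi⟩ := mem_Yset_iff.mp hi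
  have hgj := (mem_Yset_iff.mp hj).2
  have : (g.x ^ 2 - ε * g.y ^ 2) * (i - j) = 0 := by linear_combination hgj - hgi
  exact sub_eq_zero.mp ((mul_eq_zero.mp this).resolve_left ((sq_sub_mul_sq_ne_zero_iff hε).mpr hxy))

theorem mem_Yset_of_ne (hε : ¬IsSquare ε) {g : Heis F}
    (hxy : (g.x, g.y) ≠ (0, 0)) :
    g ∈ Yset ε ((g.z - g.x * g.y / 2) / (g.x ^ 2 - ε * g.y ^ 2)) :=
  mem_Yset_iff.mpr ⟨hxy, (mul_div_cancel₀ _ ((sq_sub_mul_sq_ne_zero_iff hε).mpr hxy)).symm⟩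

end Heisenberg

section Rho

variable {F : Type*} [Field F] {ε α β : F}

@[simp] theorem rho_x (g : Heis F) : (rho ε α β g).x = α * g.x + ε * β * g.y := rfl
@[simp] theorem rho_y (g : Heis F) : (rho ε α β g).y = β * g.x + α * g.y := rfl

theorem rho_z (g : Heis F) : (rho ε α β g).z = α * β * (g.x ^ 2 / 2 + ε * g.y ^ 2 / 2)
    + ε * β ^ 2 * g.x * g.y + (α ^ 2 - ε * β ^ 2) * g.z := rfl

theorem rho_one : rho ε α β 1 = 1 := by
  ext <;> simp [rho_z]

theorem rho_x_sq_sub (g : Heis F) : (rho ε α β g).x ^ 2 - ε * (rho ε α β g).y ^ 2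
    = (α ^ 2 - ε * β ^ 2) * (g.x ^ 2 - ε * g.y ^ 2) := by
  simp only [rho_x, rho_y]; ring

theorem rho_z_sub (h2 : (2 : F) ≠ 0) (g : Heis F) :
    (rho ε α β g).z - (rho ε α β g).x * (rho ε α β g).y / 2
      = (α ^ 2 - ε * β ^ 2) * (g.z - g.x * g.y / 2) := by
  simp only [rho_x, rho_y, rho_z]; field_simp; ring

theorem rho_mem_Yset (hε : ¬IsSquare ε) (h2 : (2 : F) ≠ 0) {i : F} (hαβ : (α, β) ≠ (0, 0))
    {g : Heis F} (hg : g ∈ Yset ε i) : rho ε α β g ∈ Yset ε i := by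
  obtain ⟨hxy, hz⟩ := mem_Yset_iff.mp hg
  refine mem_Yset_iff.mpr ⟨(sq_sub_mul_sq_ne_zero_iff hε).mp ?_, ?_⟩
  · rw [rho_x_sq_sub]
    exact mul_ne_zero ((sq_sub_mul_sq_ne_zero_iff hε).mpr hαβ)
      ((sq_sub_mul_sq_ne_zero_iff hε).mpr hxy)
  · rw [rho_z_sub h2, rho_x_sq_sub, hz]
    ring

end Rho

section HeisenbergOrbits

variable {F : Type*} [Field F] {ε : F}

theorem orbit_eq_singleton_one {g : Heis F} (hg : g ∈ ({1} : Set (Heis F))) :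
    {y | ∃ f ∈ Kset ε, f g = y} = {1} := by
  refine orbit_eq_of_mem ?_ ?_ hg
  · rintro _ ⟨α, β, -, rfl⟩ _ rfl
    exact rho_one
  · rintro _ rfl _ rfl
    exact ⟨rho ε 1 0, ⟨1, 0, by simp, rfl⟩, rho_one⟩

theorem orbit_eq_Zset_diff_one [Fintype F] (hodd : Odd (Fintype.card F)) (hε : ¬IsSquare ε)
    {g : Heis F} (hg : g ∈ Zset F \ {1}) : {y | ∃ f ∈ Kset ε, f g = y} = Zset F \ {1} := by
  refine orbit_eq_of_mem ?_ ?_ hg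
  · rintro _ ⟨α, β, hαβ, rfl⟩ h hh
    obtain ⟨hx, hy, hz⟩ := mem_Zset_diff_one_iff.mp hh
    refine mem_Zset_diff_one_iff.mpr ⟨by simp [hx, hy], by simp [hx, hy], ?_⟩
    simpa [rho_z, hx, hy] using mul_ne_zero ((sq_sub_mul_sq_ne_zero_iff hε).mpr hαβ) hz
  · intro g hg h hh
    obtain ⟨hgx, hgy, hgz⟩ := mem_Zset_diff_one_iff.mp hg
    obtain ⟨hhx, hhy, hhz⟩ := mem_Zset_diff_one_iff.mp hh
    obtain ⟨α, β, hN⟩ :=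
      exists_sq_sub_mul_sq_eq (ε := ε) hodd (by rintro rfl; exact hε IsSquare.zero) (h.z / g.z)
    have hαβ : (α, β) ≠ (0, 0) := (sq_sub_mul_sq_ne_zero_iff hε).mp (hN ▸ div_ne_zero hhz hgz)
    refine ⟨rho ε α β, ⟨α, β, hαβ, rfl⟩, Heis.ext ?_ ?_ ?_⟩
    · simp [hgx, hgy, hhx]
    · simp [hgx, hgy, hhy]
    · rw [rho_z, hgx, hgy, hN]
      field_simp
      ring

theorem orbit_eq_Yset (hε : ¬IsSquare ε) (h2 : (2 : F) ≠ 0) {i : F} {g : Heis F}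
    (hg : g ∈ Yset ε i) : {y | ∃ f ∈ Kset ε, f g = y} = Yset ε i := by
  refine orbit_eq_of_mem ?_ ?_ hg
  · rintro _ ⟨α, β, hαβ, rfl⟩ h hh
    exact rho_mem_Yset hε h2 hαβ hh
  · intro g hg h hh
    obtain ⟨α, β, hx, hy⟩ := exists_mul_eq hε (mem_Yset_iff.mp hg).1 h.x h.y
    have hαβ : (α, β) ≠ (0, 0) := by
      rintro ⟨⟩
      exact (mem_Yset_iff.mp hh).1 (by simp [← hx, ← hy])
    exact ⟨rho ε α β, ⟨α, β, hαβ, rfl⟩, eq_of_mem_Yset (rho_mem_Yset hε h2 hαβ hg) hh hx hy⟩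

end HeisenbergOrbits

section Partition

variable {F : Type*} [Field F] {ε : F}

theorem exists_mem_SFam (hε : ¬IsSquare ε) (g : Heis F) : ∃ S ∈ SFam ε, g ∈ S := by
  by_cases hxy : (g.x, g.y) = (0, 0)
  · simp only [Prod.mk.injEq] at hxy
    by_cases hz : g.z = 0
    · exact ⟨{1}, Set.mem_insert _ _, Heis.eq_one_iff.mpr ⟨hxy.1, hxy.2, hz⟩⟩
    · exact ⟨Zset F \ {1}, Set.mem_insert_of_mem _ (Set.mem_insert _ _),
        mem_Zset_diff_one_iff.mpr ⟨hxy.1, hxy.2, hz⟩⟩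
  · exact ⟨_, Set.mem_insert_of_mem _ (Set.mem_insert_of_mem _ ⟨_, rfl⟩), mem_Yset_of_ne hε hxy⟩

theorem nonempty_of_mem_SFam {S : Set (Heis F)} (hS : S ∈ SFam ε) : S.Nonempty := by
  rcases hS with rfl | rfl | ⟨i, rfl⟩
  · exact ⟨1, rfl⟩
  · exact ⟨gElt 0 0 1, mem_Zset_diff_one_iff.mpr ⟨rfl, rfl, one_ne_zero⟩⟩
  · exact ⟨gElt 1 0 (gam ε i 1 0), 1, 0, by simp, rfl⟩

theorem pairwiseDisjoint_SFam (hε : ¬IsSquare ε) : (SFam ε).PairwiseDisjoint id := by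
  have hZY (i : F) : Disjoint (Zset F \ {1}) (Yset ε i) :=
    Set.disjoint_left.mpr fun g hg hgY => (mem_Yset_iff.mp hgY).1 (by rw [hg.1.1, hg.1.2])
  refine Set.pairwiseDisjoint_insert.mpr ⟨Set.pairwiseDisjoint_insert.mpr ⟨?_, ?_⟩, ?_⟩
  · rintro _ ⟨i, rfl⟩ _ ⟨j, rfl⟩ hij
    refine Set.disjoint_left.mpr fun g hi hj => hij ?_
    rw [index_eq_of_mem_Yset hε hi hj]
  · rintro _ ⟨i, rfl⟩ -
    exact hZY i
  · rintro _ (rfl | ⟨i, rfl⟩) -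
    · exact Set.disjoint_singleton_left.mpr fun h => h.2 rfl
    · exact Set.disjoint_singleton_left.mpr one_notMem_Yset

end Partition

/-- The orbits of `K` acting naturally on `G` are exactly the sets
`{e}`, `Z \ {e}` and `Y_i` for `i ∈ F_q`; in particular these sets are pairwise
disjoint and partition `G`. -/
theorem statement_1 {F : Type*} [Field F] [Fintype F]
    (hodd : Odd (Fintype.card F)) (ε : F) (hε : ¬IsSquare ε) :
    {S : Set (Heis F) | ∃ g : Heis F, S = {y : Heis F | ∃ f ∈ Kset ε, f g = y}} = SFam ε ∧
    (SFam ε).PairwiseDisjoint id ∧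
    ⋃₀ SFam ε = Set.univ := by
  have h2 := two_ne_zero_of_odd_card hodd
  refine ⟨setOf_orbit_eq (exists_mem_SFam hε) (fun _ => nonempty_of_mem_SFam) ?_,
    pairwiseDisjoint_SFam hε, Set.sUnion_eq_univ_iff.mpr (exists_mem_SFam hε)⟩
  rintro S (rfl | rfl | ⟨i, rfl⟩) g hg
  · exact orbit_eq_singleton_one hg
  · exact orbit_eq_Zset_diff_one hodd hε hg
  · exact orbit_eq_Yset hε h2 hg
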